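/- Let w ∼ w' ∈ Σⁿ be neighboring strings compressed by the LZ77 compression algorithm with self-referencing (unbounded window). Then the number t₂ of type-2 blocks among the blocks of Compress_SR(w) satisfies t₂ ≤ (∛9/2)·n^{2/3} + (∛3/2)·n^{1/3} + 1. -/

import Mathlib

/-!
At most one block of `w` contains the edited position `j`. In any other block `B_i` in which
two blocks of `w'` start, the first of them, `B'_k`, ends inside `B_i`, so its phrase (copied part
plus explicit character) occurs in `w` at the matching position `p` of the source of `B_i`.
Maximality of `B'_k` in `w'` forces this occurrence to cover `j`, and the pair `(ℓ'_k, p)`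
determines `B_i`, since otherwise the later of two such blocks of `w'` could copy from the earlier.
Only `m + 1` pairs have `ℓ'_k = m`, while `B_i` then has at least `m + 2` characters; weighing
`K + 3 ≤ (m + 2) + (K + 1 - m)` over these blocks gives
`6 (K + 3) t ≤ 6 n + (K + 1)(K + 2)(K + 3)` for every `K`, and `K + 2 ≈ (3 n)^(1/3)` yields
the bound.
-/

/-- A single LZ77 block `[q, len, c]`. -/
structure LZBlock (α : Type*) where
  q : ℕ
  len : ℕ
  c : α

/-- `s_i` (1-indexed start position of the `i`-th block, `i` 0-indexed). -/
def blockStart {α : Type*} (B : List (LZBlock α)) (i : ℕ) : ℕ :=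
  1 + ((B.take i).map (fun b => b.len + 1)).sum

/-- `f_i` (1-indexed final position of the `i`-th block, `i` 0-indexed). -/
def blockFin {α : Type*} (B : List (LZBlock α)) (i : ℕ) : ℕ :=
  ((B.take (i + 1)).map (fun b => b.len + 1)).sum

/-- `ℓ_i`, recovered as `f_i - s_i`. -/
def lenAt {α : Type*} (B : List (LZBlock α)) (i : ℕ) : ℕ :=
  blockFin B i - blockStart B i

/-- Non-overlapping LZ77 parse, sliding window `W`, of the length-`n` string `w`
(1-indexed positions). -/
def IsLZ77Parse {α : Type*} (W n : ℕ) (w : ℕ → α) (B : List (LZBlock α)) : Prop :=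
  ((B.map (fun b => b.len + 1)).sum = n) ∧
  ∀ i : Fin B.length,
    ((B.get i).c = w (blockStart B i.1 + (B.get i).len)) ∧
    ((B.get i).len = 0 → (B.get i).q = 0) ∧
    (0 < (B.get i).len →
      1 ≤ (B.get i).q ∧
      blockStart B i.1 ≤ (B.get i).q + W ∧
      (B.get i).q + (B.get i).len ≤ blockStart B i.1 ∧
      ∀ d < (B.get i).len, w ((B.get i).q + d) = w (blockStart B i.1 + d)) ∧
    (blockStart B i.1 + (B.get i).len + 1 ≤ n →
      ¬ ∃ q', 1 ≤ q' ∧ blockStart B i.1 ≤ q' + W ∧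
          q' + (B.get i).len + 1 ≤ blockStart B i.1 ∧
          ∀ d ≤ (B.get i).len, w (q' + d) = w (blockStart B i.1 + d))

/-- LZ77 parse with self-referencing (unbounded window). -/
def IsLZ77SRParse {α : Type*} (n : ℕ) (w : ℕ → α) (B : List (LZBlock α)) : Prop :=
  ((B.map (fun b => b.len + 1)).sum = n) ∧
  ∀ i : Fin B.length,
    ((B.get i).c = w (blockStart B i.1 + (B.get i).len)) ∧
    ((B.get i).len = 0 → (B.get i).q = 0) ∧
    (0 < (B.get i).len →
      1 ≤ (B.get i).q ∧
      (B.get i).q < blockStart B i.1 ∧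
      ∀ d < (B.get i).len, w ((B.get i).q + d) = w (blockStart B i.1 + d)) ∧
    (blockStart B i.1 + (B.get i).len + 1 ≤ n →
      ¬ ∃ q', 1 ≤ q' ∧ q' < blockStart B i.1 ∧
          ∀ d ≤ (B.get i).len, w (q' + d) = w (blockStart B i.1 + d))

/-- `w ∼ w'`: strings of length `n` differing in exactly one position. -/
def Neighbor {α : Type*} (n : ℕ) (w w' : ℕ → α) : Prop :=
  ∃ j, 1 ≤ j ∧ j ≤ n ∧ w j ≠ w' j ∧ ∀ i, i ≠ j → w i = w' i

/-- `M_i`: the set of (0-indexed) blocks of `B'` that start inside block `i` of `B`. -/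
def Mset {α : Type*} (B B' : List (LZBlock α)) (i : ℕ) : Finset ℕ :=
  (Finset.range B'.length).filter
    (fun k => blockStart B i ≤ blockStart B' k ∧ blockStart B' k ≤ blockFin B i)

/-- Indices of type-`m` blocks of `B` (relative to `B'`). -/
def typeSet {α : Type*} (B B' : List (LZBlock α)) (m : ℕ) : Finset ℕ :=
  (Finset.range B.length).filter (fun i => (Mset B B' i).card = m)

/-- Number of bits used to encode each block. -/
def codeLen (n cardS : ℕ) : ℕ :=
  2 * Nat.clog 2 n + Nat.clog 2 cardS

section Blocks

variable {α : Type*} (B : List (LZBlock α))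

theorem blockStart_succ (i : ℕ) : blockStart B (i + 1) = blockFin B i + 1 := by
  unfold blockStart blockFin
  omega

theorem blockStart_mono : Monotone (blockStart B) := by
  refine monotone_nat_of_le_succ fun i => ?_
  unfold blockStart
  rw [List.take_add_one, List.map_append, List.sum_append]
  omega

theorem one_le_blockStart (i : ℕ) : 1 ≤ blockStart B i := by
  unfold blockStart
  omega

theorem blockFin_lt_blockStart {i i' : ℕ} (h : i < i') : blockFin B i < blockStart B i' := by
  have := blockStart_mono B (Nat.succ_le_of_lt h)
  rw [blockStart_succ] at this
  omega

theorem blockFin_eq {i : ℕ} (hi : i < B.length) : blockFin B i = blockStart B i + B[i].len := by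
  unfold blockFin blockStart
  rw [List.take_add_one, List.getElem?_eq_getElem hi]
  simp only [Option.toList_some, List.map_append, List.map_cons, List.map_nil,
    List.sum_append, List.sum_cons, List.sum_nil]
  omega

theorem lenAt_eq {i : ℕ} (hi : i < B.length) : lenAt B i = B[i].len := by
  rw [lenAt, blockFin_eq B hi]
  omega

theorem blockFin_le_sum (i : ℕ) : blockFin B i ≤ (B.map (fun b => b.len + 1)).sum := by
  unfold blockFin
  rw [List.map_take]
  exact (List.take_sublist _ _).sum_le_sum fun _ _ => Nat.zero_le _

theorem sum_blockStart_sub_le {S : Finset ℕ} (hS : S ⊆ Finset.range B.length) :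
    ∑ i ∈ S, (blockStart B (i + 1) - blockStart B i) ≤ (B.map (fun b => b.len + 1)).sum :=
  calc ∑ i ∈ S, (blockStart B (i + 1) - blockStart B i)
      ≤ ∑ i ∈ Finset.range B.length, (blockStart B (i + 1) - blockStart B i) :=
        Finset.sum_le_sum_of_subset hS
    _ = blockStart B B.length - blockStart B 0 := Finset.sum_range_tsub (blockStart_mono B) _
    _ = (B.map (fun b => b.len + 1)).sum := by simp [blockStart]

theorem card_le_card_filter_not_mem_block_add_one (T : Finset ℕ) (j : ℕ) :
    T.card ≤ (T.filter fun i => ¬ (blockStart B i ≤ j ∧ j ≤ blockFin B i)).card + 1 := by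
  have hone : (T.filter fun i => blockStart B i ≤ j ∧ j ≤ blockFin B i).card ≤ 1 := by
    refine Finset.card_le_one.2 fun a ha b hb => ?_
    by_contra hab
    wlog hlt : a < b generalizing a b
    · exact this b hb a ha (Ne.symm hab) (by omega)
    simp only [Finset.mem_filter] at ha hb
    have := blockFin_lt_blockStart B hlt
    omega
  have := Finset.card_filter_add_card_filter_not (s := T)
    fun i => blockStart B i ≤ j ∧ j ≤ blockFin B i
  omega

end Blocks

section Parse

variable {α : Type*}

/-- Since `d` ranges up to `lenAt B k`, the phrase includes the explicit character of block `k`. -/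
def PhraseOccursBefore (u v : ℕ → α) (B : List (LZBlock α)) (k p : ℕ) : Prop :=
  1 ≤ p ∧ p < blockStart B k ∧ ∀ d ≤ lenAt B k, u (p + d) = v (blockStart B k + d)

variable {n : ℕ} {w w' : ℕ → α} {B B' : List (LZBlock α)}

theorem IsLZ77SRParse.copy (h : IsLZ77SRParse n w B) {i : ℕ} (hi : i < B.length)
    (hlen : 0 < B[i].len) :
    1 ≤ B[i].q ∧ B[i].q < blockStart B i ∧
      ∀ d < B[i].len, w (B[i].q + d) = w (blockStart B i + d) :=
  (h.2 ⟨i, hi⟩).2.2.1 hlen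

theorem IsLZ77SRParse.not_phraseOccursBefore (h : IsLZ77SRParse n w B) {k q : ℕ}
    (hk : k < B.length) (hfin : blockFin B k < n) : ¬ PhraseOccursBefore w w B k q := by
  rintro ⟨hq1, hq, heq⟩
  rw [lenAt_eq B hk] at heq
  have := blockFin_eq B hk
  exact (h.2 ⟨k, hk⟩).2.2.2 (by simp only [List.get_eq_getElem]; omega) ⟨q, hq1, hq, heq⟩

/-- The edited position `j` must lie in any occurrence, in `w`, of an earlier phrase of the
parse of `w'`: otherwise that occurrence would also be one in `w'`, contradicting maximality. -/
theorem PhraseOccursBefore.le_and_le_add (hB' : IsLZ77SRParse n w' B') {j k p : ℕ}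
    (hw : ∀ x ≠ j, w x = w' x) (hk : k < B'.length) (hfin : blockFin B' k < n)
    (h : PhraseOccursBefore w w' B' k p) : p ≤ j ∧ j ≤ p + lenAt B' k := by
  by_contra hpj
  refine hB'.not_phraseOccursBefore hk hfin ⟨h.1, h.2.1, fun d hd => ?_⟩
  rw [← hw _ (by omega)]
  exact h.2.2 d hd

theorem PhraseOccursBefore.false_of_lt (hB' : IsLZ77SRParse n w' B') {k₁ k₂ p : ℕ}
    (hk₂ : k₂ < B'.length) (hfin : blockFin B' k₂ < n)
    (hlt : blockStart B' k₁ < blockStart B' k₂) (hlen : lenAt B' k₁ = lenAt B' k₂)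
    (h₁ : PhraseOccursBefore w w' B' k₁ p) (h₂ : PhraseOccursBefore w w' B' k₂ p) : False :=
  hB'.not_phraseOccursBefore hk₂ hfin ⟨one_le_blockStart B' k₁, hlt,
    fun d hd => (h₁.2.2 d (hlen ▸ hd)).symm.trans (h₂.2.2 d hd)⟩

end Parse

section InnerPhrase

variable {α : Type*} {n : ℕ} {w w' : ℕ → α} {B B' : List (LZBlock α)}

def InnerPhrase (w w' : ℕ → α) (B B' : List (LZBlock α)) (i k p : ℕ) : Prop :=
  k < B'.length ∧ blockStart B i ≤ blockStart B' k ∧ blockFin B' k < blockFin B i ∧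
    PhraseOccursBefore w w' B' k p

theorem exists_lt_length_blockFin_lt_of_two_le_card_Mset {i : ℕ}
    (hM : 2 ≤ (Mset B B' i).card) :
    ∃ k < B'.length, blockStart B i ≤ blockStart B' k ∧ blockFin B' k < blockFin B i := by
  obtain ⟨a, ha, b, hb, hab⟩ := Finset.one_lt_card.1 hM
  wlog hlt : a < b generalizing a b
  · exact this b hb a ha hab.symm (by omega)
  simp only [Mset, Finset.mem_filter, Finset.mem_range] at ha hb
  exact ⟨a, ha.1, ha.2.1, (blockFin_lt_blockStart B' hlt).trans_le hb.2.2⟩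

/-- A phrase of `w'` lying inside a block of `w` that avoids the edit is copied, in `w`, from the
corresponding part of that block's source. -/
theorem exists_innerPhrase (hB : IsLZ77SRParse n w B) {i j : ℕ} (hw : ∀ x ≠ j, w x = w' x)
    (hi : i < B.length) (hM : 2 ≤ (Mset B B' i).card)
    (hj : ¬ (blockStart B i ≤ j ∧ j ≤ blockFin B i)) :
    ∃ k p, InnerPhrase w w' B B' i k p := by
  obtain ⟨k, hk, hks, hkf⟩ := exists_lt_length_blockFin_lt_of_two_le_card_Mset hM
  have hfin := blockFin_eq B hi
  have hfin' := blockFin_eq B' hk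
  obtain ⟨hq1, hq, hcopy⟩ := hB.copy hi (by omega)
  refine ⟨k, B[i].q + (blockStart B' k - blockStart B i), hk, hks, hkf, by omega, by omega,
    fun d hd => ?_⟩
  rw [lenAt_eq B' hk] at hd
  calc w (B[i].q + (blockStart B' k - blockStart B i) + d)
      = w (blockStart B i + (blockStart B' k - blockStart B i + d)) := by
        rw [add_assoc]; exact hcopy _ (by omega)
    _ = w' (blockStart B' k + d) := by
        rw [show blockStart B i + (blockStart B' k - blockStart B i + d) = blockStart B' k + d
          by omega]
        exact hw _ (by omega)

theorem InnerPhrase.lenAt_add_two_le {i k p : ℕ} (h : InnerPhrase w w' B B' i k p) :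
    lenAt B' k + 2 ≤ blockStart B (i + 1) - blockStart B i := by
  obtain ⟨hk, hks, hkf, -⟩ := h
  have := blockFin_eq B' hk
  rw [blockStart_succ, lenAt]
  omega

theorem InnerPhrase.le_and_le_add (hB : (B.map (fun b => b.len + 1)).sum = n)
    (hB' : IsLZ77SRParse n w' B') {i j k p : ℕ} (hw : ∀ x ≠ j, w x = w' x)
    (h : InnerPhrase w w' B B' i k p) : p ≤ j ∧ j ≤ p + lenAt B' k :=
  h.2.2.2.le_and_le_add hB' hw h.1 (hB ▸ h.2.2.1.trans_le (blockFin_le_sum B i))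

/-- Equally long inner phrases with a common source lie in the same block of `B`: otherwise the
later one could be copied from the earlier one, contradicting maximality in `w'`. -/
theorem InnerPhrase.eq_of_lenAt_eq (hB : (B.map (fun b => b.len + 1)).sum = n)
    (hB' : IsLZ77SRParse n w' B') {i₁ i₂ k₁ k₂ p : ℕ}
    (h₁ : InnerPhrase w w' B B' i₁ k₁ p) (h₂ : InnerPhrase w w' B B' i₂ k₂ p)
    (hlen : lenAt B' k₁ = lenAt B' k₂) : i₁ = i₂ := by
  by_contra hne
  wlog hlt : i₁ < i₂ generalizing i₁ i₂ k₁ k₂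
  · exact this h₂ h₁ hlen.symm (Ne.symm hne) (by omega)
  obtain ⟨hk₁, -, hkf₁, hocc₁⟩ := h₁
  obtain ⟨hk₂, hks₂, hkf₂, hocc₂⟩ := h₂
  have := blockFin_eq B' hk₁
  have := blockFin_lt_blockStart B hlt
  exact hocc₁.false_of_lt hB' hk₂ (hB ▸ hkf₂.trans_le (blockFin_le_sum B i₂)) (by omega)
    hlen hocc₂

end InnerPhrase

section Counting

variable {ι : Type*} {S : Finset ι} {m p : ι → ℕ} {j : ℕ}

theorem card_filter_eq_le_of_injOn (hinj : Set.InjOn (fun i => (m i, p i)) S)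
    (hcov : ∀ i ∈ S, p i ≤ j ∧ j ≤ p i + m i) (a : ℕ) :
    (S.filter fun i => m i = a).card ≤ a + 1 := by
  calc (S.filter fun i => m i = a).card ≤ (Finset.Icc (j - a) j).card := by
        refine Finset.card_le_card_of_injOn p (fun i hi => ?_) (fun i₁ h₁ i₂ h₂ hp => ?_)
        · simp only [Finset.coe_filter, Set.mem_ofPred_eq] at hi
          have := hcov i hi.1
          simp only [Finset.coe_Icc, Set.mem_Icc]
          omega
        · simp only [Finset.coe_filter, Set.mem_ofPred_eq] at h₁ h₂
          exact hinj h₁.1 h₂.1 (Prod.ext (h₁.2.trans h₂.2.symm) hp)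
    _ ≤ a + 1 := by
        rw [Nat.card_Icc]
        omega

theorem sum_tsub_le_of_injOn (hinj : Set.InjOn (fun i => (m i, p i)) S)
    (hcov : ∀ i ∈ S, p i ≤ j ∧ j ≤ p i + m i) (K : ℕ) :
    ∑ i ∈ S, (K + 1 - m i) ≤ ∑ a ∈ Finset.range (K + 1), (a + 1) * (K + 1 - a) := by
  set S' := S.filter fun i => m i ≤ K
  have hS' : S' ⊆ S := Finset.filter_subset _ _
  calc ∑ i ∈ S, (K + 1 - m i) = ∑ i ∈ S', (K + 1 - m i) :=
        (Finset.sum_filter_of_ne fun i _ hi => by omega).symm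
    _ = ∑ a ∈ Finset.range (K + 1), ∑ i ∈ S' with m i = a, (K + 1 - m i) :=
        (Finset.sum_fiberwise_of_maps_to (fun i hi => by
          simp only [S', Finset.mem_filter] at hi
          exact Finset.mem_range.2 (by omega)) _).symm
    _ = ∑ a ∈ Finset.range (K + 1), (S'.filter fun i => m i = a).card * (K + 1 - a) := by
        refine Finset.sum_congr rfl fun a _ => ?_
        rw [Finset.sum_congr rfl fun i hi => by rw [(Finset.mem_filter.1 hi).2],
          Finset.sum_const, smul_eq_mul]
    _ ≤ ∑ a ∈ Finset.range (K + 1), (a + 1) * (K + 1 - a) := by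
        gcongr with a
        exact card_filter_eq_le_of_injOn (hinj.mono (by simpa using hS'))
          (fun i hi => hcov i (hS' hi)) a

theorem six_mul_sum_range_mul_tsub (K : ℕ) :
    6 * ∑ a ∈ Finset.range (K + 1), (a + 1) * (K + 1 - a) = (K + 1) * (K + 2) * (K + 3) := by
  induction K with
  | zero => rfl
  | succ K ih =>
    have hgauss := Finset.sum_range_id_mul_two (K + 3)
    rw [Finset.sum_range_succ'] at hgauss
    have hsplit : ∀ a ∈ Finset.range (K + 2),
        (a + 1) * (K + 1 + 1 - a) = (a + 1) * (K + 1 - a) + (a + 1) := fun a ha => by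
      rw [Finset.mem_range] at ha
      rw [show K + 1 + 1 - a = K + 1 - a + 1 by omega]
      ring
    rw [Finset.sum_congr rfl hsplit, Finset.sum_add_distrib, Finset.sum_range_succ,
      Nat.sub_self, mul_zero, add_zero, mul_add, ih]
    rw [add_zero, show K + 3 - 1 = K + 2 by omega] at hgauss
    nlinarith [hgauss]

theorem card_mul_le_of_injOn (hinj : Set.InjOn (fun i => (m i, p i)) S)
    (hcov : ∀ i ∈ S, p i ≤ j ∧ j ≤ p i + m i) {n : ℕ}
    (hsum : ∑ i ∈ S, (m i + 2) ≤ n) (K : ℕ) :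
    6 * ((K + 3) * S.card) ≤ 6 * n + (K + 1) * (K + 2) * (K + 3) := by
  have hcap := sum_tsub_le_of_injOn hinj hcov K
  have hweight : (K + 3) * S.card ≤ ∑ i ∈ S, (m i + 2) + ∑ i ∈ S, (K + 1 - m i) := by
    rw [← Finset.sum_add_distrib, mul_comm, ← smul_eq_mul, ← Finset.sum_const]
    exact Finset.sum_le_sum fun i _ => by omega
  have := six_mul_sum_range_mul_tsub K
  omega

/-- Take `K + 2 = ⌊X⌋₊ + 1 ∈ (X, X + 1]` in `card_mul_le_of_injOn`. -/
theorem two_mul_card_le_of_injOn (hinj : Set.InjOn (fun i => (m i, p i)) S)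
    (hcov : ∀ i ∈ S, p i ≤ j ∧ j ≤ p i + m i) {n : ℕ}
    (hsum : ∑ i ∈ S, (m i + 2) ≤ n) {X : ℝ} (hX : 1 ≤ X) (hnX : 3 * (n : ℝ) ≤ X ^ 3) :
    2 * (S.card : ℝ) ≤ X ^ 2 + X := by
  have hF : 1 ≤ ⌊X⌋₊ := Nat.one_le_floor_iff _ |>.2 hX
  have hFX : (⌊X⌋₊ : ℝ) ≤ X := Nat.floor_le (by linarith)
  have hXF : X < ⌊X⌋₊ + 1 := Nat.lt_floor_add_one X
  have h := card_mul_le_of_injOn hinj hcov hsum (⌊X⌋₊ - 1)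
  rw [show ⌊X⌋₊ - 1 + 2 = ⌊X⌋₊ + 1 by omega, show ⌊X⌋₊ - 1 + 3 = ⌊X⌋₊ + 2 by omega,
    show ⌊X⌋₊ - 1 + 1 = ⌊X⌋₊ by omega] at h
  set y : ℝ := ⌊X⌋₊ + 1
  have hreal : 6 * ((y + 1) * (S.card : ℝ)) ≤ 6 * n + (y - 1) * y * (y + 1) := by
    have : (6 * ((⌊X⌋₊ + 2) * S.card) : ℝ) ≤
        6 * n + ⌊X⌋₊ * (⌊X⌋₊ + 1) * (⌊X⌋₊ + 2) := by
      exact_mod_cast h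
    simp only [y]
    linarith
  have hcubic : 2 * X ^ 3 + (y - 1) * y * (y + 1) ≤ 3 * (y + 1) * (X ^ 2 + X) := by
    nlinarith [mul_nonneg (sub_nonneg.2 hXF.le) (sub_nonneg.2 (show y ≤ X + 1 by linarith)),
      mul_nonneg (mul_nonneg (sub_nonneg.2 hXF.le) (sub_nonneg.2 (show y ≤ X + 1 by linarith)))
        (show (0 : ℝ) ≤ X by linarith)]
  have hy : 0 < y + 1 := by positivity
  nlinarith

end Counting

theorem rpow_one_third_pow_three {x : ℝ} (hx : 0 ≤ x) : (x ^ ((1 : ℝ) / 3)) ^ 3 = x := by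
  rw [← Real.rpow_natCast, ← Real.rpow_mul hx]
  norm_num

theorem cbrt_nine_mul_rpow_two_thirds {x : ℝ} (hx : 0 ≤ x) :
    (9 : ℝ) ^ ((1 : ℝ) / 3) * x ^ ((2 : ℝ) / 3) = ((3 * x) ^ ((1 : ℝ) / 3)) ^ 2 := by
  rw [← Real.rpow_natCast, ← Real.rpow_mul (by positivity), Real.mul_rpow (by norm_num) hx,
    show (9 : ℝ) = 3 ^ (2 : ℝ) by norm_num, ← Real.rpow_mul (by norm_num)]
  norm_num

/-- Lemma: bound on the number of type-2 blocks for LZ77 with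
self-referencing, unbounded window. For neighboring strings `w ∼ w' ∈ Σⁿ`,
the number of type-2 blocks among the blocks of `Compress_SR(w)` satisfies
`t₂ ≤ (∛9/2)·n^(2/3) + (∛3/2)·n^(1/3) + 1`. -/
theorem lz77SR_typeTwo_count_bound {α : Type*} (n : ℕ) (w w' : ℕ → α)
    (hnb : Neighbor n w w')
    (B B' : List (LZBlock α))
    (hB : IsLZ77SRParse n w B) (hB' : IsLZ77SRParse n w' B') :
    (((typeSet B B' 2).card : ℝ)) ≤
      (9 : ℝ) ^ ((1 : ℝ) / 3) / 2 * (n : ℝ) ^ ((2 : ℝ) / 3)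
        + (3 : ℝ) ^ ((1 : ℝ) / 3) / 2 * (n : ℝ) ^ ((1 : ℝ) / 3) + 1 := by
  obtain ⟨j, hj1, hjn, -, hw⟩ := hnb
  set S := (typeSet B B' 2).filter fun i => ¬ (blockStart B i ≤ j ∧ j ≤ blockFin B i)
  have hSB : S ⊆ Finset.range B.length :=
    (Finset.filter_subset _ _).trans (Finset.filter_subset _ _)
  have hinner : ∀ i ∈ S, ∃ k p, InnerPhrase w w' B B' i k p := fun i hi => by
    simp only [S, typeSet, Finset.mem_filter, Finset.mem_range] at hi
    exact exists_innerPhrase hB hw hi.1.1 hi.1.2.ge hi.2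
  choose! k p hkp using hinner
  have hsum : ∑ i ∈ S, (lenAt B' (k i) + 2) ≤ n :=
    hB.1 ▸ (Finset.sum_le_sum fun i hi => (hkp i hi).lenAt_add_two_le).trans
      (sum_blockStart_sub_le B hSB)
  have hinj : Set.InjOn (fun i => (lenAt B' (k i), p i)) S := fun i₁ h₁ i₂ h₂ h => by
    simp only [Prod.mk.injEq] at h
    exact (hkp i₁ h₁).eq_of_lenAt_eq hB.1 hB' (h.2 ▸ hkp i₂ h₂) h.1
  have hS := two_mul_card_le_of_injOn hinj
    (fun i hi => (hkp i hi).le_and_le_add hB.1 hB' hw) hsum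
    (Real.one_le_rpow (by norm_cast; omega) (by norm_num))
    (rpow_one_third_pow_three (by positivity)).ge
  have hT : ((typeSet B B' 2).card : ℝ) ≤ S.card + 1 := by
    exact_mod_cast card_le_card_filter_not_mem_block_add_one B (typeSet B B' 2) j
  rw [div_mul_eq_mul_div, div_mul_eq_mul_div,
    cbrt_nine_mul_rpow_two_thirds (Nat.cast_nonneg n),
    ← Real.mul_rpow (by norm_num) (Nat.cast_nonneg n)]
  linarith
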